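/- Let L be a finite-dimensional p-nilpotent restricted Lie algebra over a field F of characteristic p > 0. Then the second dimension subalgebra 𝔇₂(L) = L ∩ ω(L)² equals L' + L^{[p]}, the Frattini restricted subalgebra of L. -/

import Mathlib

section Restricted

variable (p : ℕ) (F : Type*) (L : Type*) [Field F] [LieRing L] [LieAlgebra F L]

/-- A restricted Lie algebra structure on `L` (over `F` of characteristic `p`): a `p`-map
that is `p`-semilinear for scalars, satisfies `ad (x^[p]) = (ad x)^p`, and satisfies
Jacobson's formula, expressed inside the universal enveloping algebra (where the genuine
`p`-th powers are available) via the canonical embedding `ι`. -/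
structure RestrictedStr where
  pMap : L → L
  smul_pow : ∀ (t : F) (x : L), pMap (t • x) = t ^ p • pMap x
  ad_pow : ∀ x y : L, ⁅pMap x, y⁆ = ((LieAlgebra.ad F L x) ^ p) y
  jacobson_add : ∀ x y : L,
    (UniversalEnvelopingAlgebra.ι F (pMap (x + y)) : UniversalEnvelopingAlgebra F L)
        - UniversalEnvelopingAlgebra.ι F (pMap x) - UniversalEnvelopingAlgebra.ι F (pMap y)
      = (UniversalEnvelopingAlgebra.ι F (x + y) : UniversalEnvelopingAlgebra F L) ^ p
        - (UniversalEnvelopingAlgebra.ι F x : UniversalEnvelopingAlgebra F L) ^ p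
        - (UniversalEnvelopingAlgebra.ι F y : UniversalEnvelopingAlgebra F L) ^ p

variable {p F L}

namespace RestrictedStr

variable (S : RestrictedStr p F L)

/-- `L` is `p`-nilpotent: every element is killed by some iterate of the `p`-map. -/
def IsPNilpotent : Prop := ∀ x : L, ∃ n : ℕ, S.pMap^[n] x = 0

/-- The defining relation of the restricted enveloping algebra `u(L)`:
`ι(x)^p = ι(x^[p])` for all `x ∈ L`. -/
def pRel : UniversalEnvelopingAlgebra F L → UniversalEnvelopingAlgebra F L → Prop :=
  fun a b => ∃ x : L, a = (UniversalEnvelopingAlgebra.ι F x : UniversalEnvelopingAlgebra F L) ^ p ∧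
    b = UniversalEnvelopingAlgebra.ι F (S.pMap x)

/-- The restricted enveloping algebra `u(L)`. -/
def uRes : Type _ := RingQuot S.pRel

noncomputable instance : Ring S.uRes := inferInstanceAs (Ring (RingQuot S.pRel))
noncomputable instance : Algebra F S.uRes := inferInstanceAs (Algebra F (RingQuot S.pRel))

attribute [local instance 100] LieRing.ofAssociativeRing

/-- The canonical `F`-linear map `L → u(L)`. -/
noncomputable def iota : L →ₗ[F] S.uRes :=
  (RingQuot.mkAlgHom F S.pRel).toLinearMap ∘ₗ (UniversalEnvelopingAlgebra.ι F).toLinearMap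

/-- The augmentation ideal `ω(L)` of `u(L)`: the (two-sided) ideal generated by the image
of `L`, viewed as an `F`-submodule (so that powers `ω(L)^n` make sense). -/
noncomputable def omega : Submodule F S.uRes :=
  Submodule.span F {a : S.uRes | ∃ u v : S.uRes, ∃ x : L, a = u * S.iota x * v}

/-- The restricted subalgebra of `L` generated by a subset `s`: the smallest Lie subalgebra
containing `s` and closed under the `p`-map. -/
def resSpan (s : Set L) : LieSubalgebra F L :=
  sInf {K : LieSubalgebra F L | s ⊆ K ∧ ∀ x ∈ K, S.pMap x ∈ K}

/-- `L` decomposes as a direct sum of cyclic restricted subalgebras. -/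
def CyclicDecomp : Prop :=
  ∃ (n : ℕ) (x : Fin n → L),
    DirectSum.IsInternal (fun i : Fin n => (S.resSpan {x i}).toSubmodule)

end RestrictedStr

/-- A filtered multiplicative basis of a finite-dimensional associative `F`-algebra `A`:
an `F`-basis `B` such that the product of any two elements of `B` is `0` or lies in `B`,
and `B ∩ rad(A)` is an `F`-basis of the Jacobson radical `rad(A)`. -/
def IsFMBasis (F : Type*) {A : Type*} [Field F] [Ring A] [Algebra F A] (B : Set A) : Prop :=
  LinearIndependent F ((↑) : B → A) ∧ Submodule.span F B = ⊤ ∧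
    (∀ b1 ∈ B, ∀ b2 ∈ B, b1 * b2 = 0 ∨ b1 * b2 ∈ B) ∧
    Submodule.span F (B ∩ (((⊥ : Ideal A).jacobson : Set A))) =
      Submodule.restrictScalars F (⊥ : Ideal A).jacobson

end Restricted

section Aux

/-- An auxiliary (non-instance) `Fᵐᵒᵖ`-module structure on a module, via commutativity. -/
noncomputable def AuxOpModule (F V : Type*) [Field F] [AddCommGroup V] [Module F V] :
    Module Fᵐᵒᵖ V :=
  Module.compHom V (RingHom.fromOpposite (RingHom.id F) mul_comm)

namespace RestrictedStr

variable {p : ℕ} {F L : Type*} [Field F] [LieRing L] [LieAlgebra F L]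
variable (S : RestrictedStr p F L)

attribute [local instance 100] LieRing.ofAssociativeRing

lemma iota_mem_omega (x : L) : S.iota x ∈ S.omega :=
  Submodule.subset_span ⟨1, 1, x, by rw [one_mul, mul_one]⟩

lemma omega_mul_mem {a : S.uRes} (ha : a ∈ S.omega) (r : S.uRes) : a * r ∈ S.omega := by
  induction ha using Submodule.span_induction with
  | mem a h =>
    obtain ⟨u, v, x, rfl⟩ := h
    exact Submodule.subset_span ⟨u, v * r, x, by rw [mul_assoc]⟩
  | zero => simp
  | add a b _ _ ha hb => simpa [add_mul] using S.omega.add_mem ha hb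
  | smul t a _ ha => simpa [smul_mul_assoc] using S.omega.smul_mem t ha

lemma omega_sq_mul_mem {a : S.uRes} (ha : a ∈ S.omega ^ 2) (r : S.uRes) :
    a * r ∈ S.omega ^ 2 := by
  rw [pow_two] at ha ⊢
  refine Submodule.mul_induction_on ha (fun m hm n hn => ?_) (fun x y hx hy => ?_) (r := a)
  · rw [mul_assoc]
    exact Submodule.mul_mem_mul hm (S.omega_mul_mem hn r)
  · simpa [add_mul] using Submodule.add_mem _ hx hy

lemma iota_pow_mem_omega_sq (hp : 2 ≤ p) (x : L) : (S.iota x) ^ p ∈ S.omega ^ 2 := by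
  obtain ⟨k, rfl⟩ := Nat.exists_eq_add_of_le hp
  have h2 : (S.iota x) ^ 2 ∈ S.omega ^ 2 := by
    rw [pow_two, pow_two]
    exact Submodule.mul_mem_mul (S.iota_mem_omega x) (S.iota_mem_omega x)
  rw [pow_add]
  exact S.omega_sq_mul_mem h2 _

lemma iota_pMap (x : L) : S.iota (S.pMap x) = (S.iota x) ^ p := by
  have h : RingQuot.mkAlgHom F S.pRel ((UniversalEnvelopingAlgebra.ι F x) ^ p)
      = RingQuot.mkAlgHom F S.pRel (UniversalEnvelopingAlgebra.ι F (S.pMap x)) :=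
    RingQuot.mkAlgHom_rel F ⟨x, rfl, rfl⟩
  rw [map_pow] at h
  exact h.symm

lemma iota_lie (x y : L) :
    S.iota ⁅x, y⁆ = S.iota x * S.iota y - S.iota y * S.iota x := by
  show RingQuot.mkAlgHom F S.pRel (UniversalEnvelopingAlgebra.ι F ⁅x, y⁆) = _
  rw [LieHom.map_lie, Ring.lie_def, map_sub, map_mul, map_mul]
  rfl

lemma iota_lie_mem_omega_sq (x y : L) : S.iota ⁅x, y⁆ ∈ S.omega ^ 2 := by
  rw [S.iota_lie, pow_two]
  exact sub_mem (Submodule.mul_mem_mul (S.iota_mem_omega x) (S.iota_mem_omega y))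
    (Submodule.mul_mem_mul (S.iota_mem_omega y) (S.iota_mem_omega x))

end RestrictedStr

end Aux

theorem dim_two_eq_derived_sup_pth_powers (p : ℕ) [Fact p.Prime] (F L : Type*) [Field F]
    [CharP F p] [LieRing L] [LieAlgebra F L] [FiniteDimensional F L]
    (S : RestrictedStr p F L) (hnil : S.IsPNilpotent) :
    Submodule.comap S.iota (S.omega ^ 2)
      = Submodule.span F {z : L | ∃ x y : L, z = ⁅x, y⁆} ⊔
        (S.resSpan {z : L | ∃ x : L, z = S.pMap x}).toSubmodule := by
  classical
  have hp2 : 2 ≤ p := (Fact.out : p.Prime).two_le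
  set R : Submodule F L :=
    Submodule.span F {z : L | ∃ x y : L, z = ⁅x, y⁆} ⊔
      (S.resSpan {z : L | ∃ x : L, z = S.pMap x}).toSubmodule with hR
  -- membership facts for R
  have hlieR : ∀ x y : L, ⁅x, y⁆ ∈ R := fun x y =>
    le_sup_left (α := Submodule F L) (Submodule.subset_span ⟨x, y, rfl⟩)
  have hpR : ∀ x : L, S.pMap x ∈ R := by
    intro x
    refine le_sup_right (α := Submodule F L) ?_
    show S.pMap x ∈ (S.resSpan {z : L | ∃ x : L, z = S.pMap x} : Set L)
    rw [RestrictedStr.resSpan, LieSubalgebra.coe_sInf]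
    exact Set.mem_iInter₂.2 fun K hK => hK.1 ⟨x, rfl⟩
  apply le_antisymm
  · -- hard direction: comap ι (ω²) ≤ R
    intro x hx
    -- build the square-zero extension of L ⧸ R
    set V := L ⧸ R with hV
    letI : Module Fᵐᵒᵖ V := AuxOpModule F V
    haveI : IsCentralScalar F V := ⟨fun _ _ => rfl⟩
    set q : L →ₗ[F] V := R.mkQ with hq
    have hqlie : ∀ a b : L, q ⁅a, b⁆ = 0 := fun a b =>
      (Submodule.Quotient.mk_eq_zero R).2 (hlieR a b)
    have hqp : ∀ a : L, q (S.pMap a) = 0 := fun a =>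
      (Submodule.Quotient.mk_eq_zero R).2 (hpR a)
    letI : LieRing (TrivSqZeroExt F V) := LieRing.ofAssociativeRing
    -- the Lie algebra morphism L → TrivSqZeroExt F V
    let f : L →ₗ⁅F⁆ TrivSqZeroExt F V :=
      { toFun := fun z => TrivSqZeroExt.inr (q z)
        map_add' := fun a b => by
          show TrivSqZeroExt.inr (q (a + b)) = TrivSqZeroExt.inr (q a) + TrivSqZeroExt.inr (q b)
          rw [map_add, TrivSqZeroExt.inr_add]
        map_smul' := fun t a => by
          show TrivSqZeroExt.inr (q (t • a)) = t • TrivSqZeroExt.inr (q a)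
          rw [map_smul, TrivSqZeroExt.inr_smul]
        map_lie' := fun {a b} => by
          show TrivSqZeroExt.inr (q ⁅a, b⁆) = ⁅_, _⁆
          rw [hqlie, TrivSqZeroExt.inr_zero, Ring.lie_def, TrivSqZeroExt.inr_mul_inr,
            TrivSqZeroExt.inr_mul_inr, sub_zero] }
    let φ0 : UniversalEnvelopingAlgebra F L →ₐ[F] TrivSqZeroExt F V :=
      UniversalEnvelopingAlgebra.lift F f
    have hφ0rel : ∀ ⦃a b : UniversalEnvelopingAlgebra F L⦄, S.pRel a b → φ0 a = φ0 b := by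
      rintro a b ⟨y, rfl, rfl⟩
      rw [map_pow, UniversalEnvelopingAlgebra.lift_ι_apply, UniversalEnvelopingAlgebra.lift_ι_apply]
      show (TrivSqZeroExt.inr (q y)) ^ p = TrivSqZeroExt.inr (q (S.pMap y))
      rw [hqp, TrivSqZeroExt.inr_zero]
      obtain ⟨k, rfl⟩ := Nat.exists_eq_add_of_le hp2
      rw [pow_add, pow_two, TrivSqZeroExt.inr_mul_inr, zero_mul]
    let φ : S.uRes →ₐ[F] TrivSqZeroExt F V := RingQuot.liftAlgHom F ⟨φ0, hφ0rel⟩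
    have hφι : ∀ z : L, φ (S.iota z) = TrivSqZeroExt.inr (q z) := by
      intro z
      show (RingQuot.liftAlgHom F ⟨φ0, hφ0rel⟩)
          (RingQuot.mkAlgHom F S.pRel (UniversalEnvelopingAlgebra.ι F z)) = _
      rw [RingQuot.liftAlgHom_mkAlgHom_apply, UniversalEnvelopingAlgebra.lift_ι_apply]
      rfl
    -- every element of ω maps to something with zero `fst`
    have homega : ∀ a ∈ S.omega, (φ a).fst = 0 := by
      intro a ha
      induction ha using Submodule.span_induction with
      | mem a h =>
        obtain ⟨u, v, z, rfl⟩ := h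
        rw [map_mul, map_mul, TrivSqZeroExt.fst_mul, TrivSqZeroExt.fst_mul, hφι,
          TrivSqZeroExt.fst_inr, mul_zero, zero_mul]
      | zero => rw [map_zero, TrivSqZeroExt.fst_zero]
      | add a b _ _ ha hb => rw [map_add, TrivSqZeroExt.fst_add, ha, hb, add_zero]
      | smul t a _ ha => rw [map_smul, TrivSqZeroExt.fst_smul, ha, smul_zero]
    -- hence everything in ω² maps to 0
    have homega2 : ∀ a ∈ S.omega ^ 2, φ a = 0 := by
      intro a ha
      rw [pow_two] at ha
      refine Submodule.mul_induction_on ha (fun m hm n hn => ?_) (fun x y hx hy => ?_)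
      · have hm' := homega m hm
        have hn' := homega n hn
        have em : φ m = TrivSqZeroExt.inr (φ m).snd := by
          conv_lhs => rw [← TrivSqZeroExt.inl_fst_add_inr_snd_eq (φ m)]
          rw [hm', TrivSqZeroExt.inl_zero, zero_add]
        have en : φ n = TrivSqZeroExt.inr (φ n).snd := by
          conv_lhs => rw [← TrivSqZeroExt.inl_fst_add_inr_snd_eq (φ n)]
          rw [hn', TrivSqZeroExt.inl_zero, zero_add]
        rw [map_mul, em, en, TrivSqZeroExt.inr_mul_inr]
      · rw [map_add, hx, hy, add_zero]
    have : TrivSqZeroExt.inr (q x) = (0 : TrivSqZeroExt F V) := by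
      rw [← hφι x]
      exact homega2 _ hx
    have hqx : q x = 0 := by
      apply TrivSqZeroExt.inr_injective (R := F)
      rw [this, TrivSqZeroExt.inr_zero]
    exact (Submodule.Quotient.mk_eq_zero R).1 hqx
  · -- easy direction: R ≤ comap ι (ω²)
    apply sup_le
    · rw [Submodule.span_le]
      rintro z ⟨x, y, rfl⟩
      exact S.iota_lie_mem_omega_sq x y
    · -- the comap is a restricted subalgebra containing the p-th powers
      let K : LieSubalgebra F L :=
        { Submodule.comap S.iota (S.omega ^ 2) with
          lie_mem' := fun {a b} _ _ => by exact S.iota_lie_mem_omega_sq a b }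
      have hK : S.resSpan {z : L | ∃ x : L, z = S.pMap x} ≤ K := by
        apply sInf_le
        constructor
        · rintro z ⟨x, rfl⟩
          show S.iota (S.pMap x) ∈ S.omega ^ 2
          rw [S.iota_pMap]
          exact S.iota_pow_mem_omega_sq hp2 x
        · intro a _
          show S.iota (S.pMap a) ∈ S.omega ^ 2
          rw [S.iota_pMap]
          exact S.iota_pow_mem_omega_sq hp2 a
      exact hK
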